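/- arXiv:1312.0655 — 4 statements merged into one kernel-verified Lean document; each statement's English description precedes it below -/
import Mathlib

section
/- For all ε > 0, Δ > 0 and γ ∈ [0,1], the two-dimensional staircase density integrates to one: ∫_{ℝ²} f_γ(x) dx = 1, with the normalization constant a(γ) = 1 / (2Δ² (γ² + (2b/(1−b))γ + (b+b²)/(1−b)²)) where b = e^{−ε}. -/
open MeasureTheory Real Filter
open scoped ENNReal Topology

noncomputable section

/-- The ℓ¹ norm on ℝ². -/
def l1 (x : ℝ × ℝ) : ℝ := |x.1| + |x.2|

/-- Normalization constant of the 2-dimensional staircase density. -/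
def anorm (ε Δ γ : ℝ) : ℝ :=
  1 / (2 * Δ ^ 2 * (γ ^ 2 + 2 * Real.exp (-ε) / (1 - Real.exp (-ε)) * γ +
    (Real.exp (-ε) + Real.exp (-ε) ^ 2) / (1 - Real.exp (-ε)) ^ 2))

/-- The 2-dimensional staircase density with parameter γ; for ‖x‖₁ ∈ [kΔ, (k+γ)Δ) it
equals a(γ)·e^{-kε}, and for ‖x‖₁ ∈ [(k+γ)Δ, (k+1)Δ) it equals a(γ)·e^{-(k+1)ε}. -/
def stair (ε Δ γ : ℝ) (x : ℝ × ℝ) : ℝ :=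
  if l1 x < ((⌊l1 x / Δ⌋ : ℝ) + γ) * Δ then
    anorm ε Δ γ * Real.exp (-(⌊l1 x / Δ⌋ : ℝ) * ε)
  else
    anorm ε Δ γ * Real.exp (-((⌊l1 x / Δ⌋ : ℝ) + 1) * ε)

/-!
The density is constant on the ℓ¹-annuli `kΔ ≤ ‖x‖₁ < (k+γ)Δ` (value `a bᵏ`) and
`(k+γ)Δ ≤ ‖x‖₁ < (k+1)Δ` (value `a bᵏ⁺¹`), and the ℓ¹-ball of radius `r` in the plane has
area `2r²`. Hence the integral is `2Δ²a ∑ₖ (bᵏ((k+γ)² - k²) + bᵏ⁺¹((k+1)² - (k+γ)²))`, an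
arithmetico-geometric series whose sum is `γ² + 2bγ/(1-b) + (b+b²)/(1-b)²`, i.e. `1/(2Δ²a)`.
-/

open Set

lemma integral_tsum_of_nonneg {α : Type*} [MeasurableSpace α] {μ : Measure α} {F : ℕ → α → ℝ}
    {I : ℝ} (hF : ∀ n, Integrable (F n) μ) (hF0 : ∀ n, 0 ≤ F n)
    (hI : HasSum (fun n => ∫ x, F n x ∂μ) I) : ∫ x, ∑' n, F n x ∂μ = I := by
  have hnorm : ∀ n, ∫ x, ‖F n x‖ ∂μ = ∫ x, F n x ∂μ := fun n =>
    integral_congr_ae (.of_forall fun x => Real.norm_of_nonneg (hF0 n x))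
  refine (hasSum_integral_of_summable_integral_norm hF ?_).unique hI
  simpa only [hnorm] using hI.summable

lemma hasSum_shellMass {b : ℝ} (hb0 : 0 ≤ b) (hb1 : b < 1) (γ : ℝ) :
    HasSum (fun n : ℕ => b ^ n * ((n + γ) ^ 2 - n ^ 2) + b ^ (n + 1) * ((n + 1) ^ 2 - (n + γ) ^ 2))
      (γ ^ 2 + 2 * b / (1 - b) * γ + (b + b ^ 2) / (1 - b) ^ 2) := by
  have hb : ‖b‖ < 1 := by rwa [Real.norm_of_nonneg hb0]
  have h1b : 1 - b ≠ 0 := by linarith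
  have hsum := ((hasSum_coe_mul_geometric_of_norm_lt_one hb).mul_left (2 * γ + 2 * b * (1 - γ))).add
    ((hasSum_geometric_of_lt_one hb0 hb1).mul_left (γ ^ 2 + b * (1 - γ ^ 2)))
  have hval : (2 * γ + 2 * b * (1 - γ)) * (b / (1 - b) ^ 2) + (γ ^ 2 + b * (1 - γ ^ 2)) * (1 - b)⁻¹
      = γ ^ 2 + 2 * b / (1 - b) * γ + (b + b ^ 2) / (1 - b) ^ 2 := by
    field_simp
    ring
  exact (hval ▸ hsum).congr_fun fun n => by ring

lemma continuous_l1 : Continuous l1 := by unfold l1; fun_prop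

lemma volume_l1_lt {r : ℝ} (hr : 0 ≤ r) :
    volume (l1 ⁻¹' Iio r) = ENNReal.ofReal (2 * r ^ 2) := by
  have hball := volume_sum_rpow_lt (Fin 2) le_rfl r
  have hset : {x : Fin 2 → ℝ | (∑ i, |x i| ^ (1 : ℝ)) ^ (1 / (1 : ℝ)) < r}
      = MeasurableEquiv.finTwoArrow ⁻¹' (l1 ⁻¹' Iio r) := by
    ext x
    simp [Fin.sum_univ_two, l1, MeasurableEquiv.finTwoArrow]
  rw [hset, (volume_preserving_finTwoArrow ℝ).measure_preimage
    (continuous_l1.measurable measurableSet_Iio).nullMeasurableSet] at hball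
  rw [hball]
  norm_num [Real.Gamma_two]
  rw [mul_comm, show (2 : ℝ≥0∞) = ENNReal.ofReal 2 by norm_num,
    ← ENNReal.ofReal_pow hr, ← ENNReal.ofReal_mul (by norm_num)]

lemma volume_l1_preimage_Ico {c d : ℝ} (hc : 0 ≤ c) (hcd : c ≤ d) :
    volume (l1 ⁻¹' Ico c d) = ENNReal.ofReal (2 * d ^ 2 - 2 * c ^ 2) := by
  have hIco : Ico c d = Iio d \ Iio c := by ext; simp
  rw [hIco, preimage_sdiff, measure_sdiff (preimage_mono (Iio_subset_Iio hcd))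
    (continuous_l1.measurable measurableSet_Iio).nullMeasurableSet
    (by rw [volume_l1_lt hc]; exact ENNReal.ofReal_ne_top),
    volume_l1_lt hc, volume_l1_lt (hc.trans hcd), ← ENNReal.ofReal_sub _ (by positivity)]

lemma integrable_indicator_l1_preimage_Ico {c d : ℝ} (hc : 0 ≤ c) (hcd : c ≤ d) (v : ℝ) :
    Integrable ((l1 ⁻¹' Ico c d).indicator fun _ => v) :=
  (integrable_indicator_iff (continuous_l1.measurable measurableSet_Ico)).2 <|
    integrableOn_const <| by rw [volume_l1_preimage_Ico hc hcd]; exact ENNReal.ofReal_ne_top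

lemma integral_indicator_l1_preimage_Ico {c d : ℝ} (hc : 0 ≤ c) (hcd : c ≤ d) (v : ℝ) :
    ∫ x, (l1 ⁻¹' Ico c d).indicator (fun _ => v) x = (2 * d ^ 2 - 2 * c ^ 2) * v := by
  rw [integral_indicator_const _ (continuous_l1.measurable measurableSet_Ico), measureReal_def,
    volume_l1_preimage_Ico hc hcd, ENNReal.toReal_ofReal (by nlinarith), smul_eq_mul]

section Staircase

variable (ε Δ γ : ℝ)

def stairShell (n : ℕ) (x : ℝ × ℝ) : ℝ :=
  (l1 ⁻¹' Ico (n * Δ) ((n + γ) * Δ)).indicator (fun _ => anorm ε Δ γ * exp (-ε) ^ n) x +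
    (l1 ⁻¹' Ico ((n + γ) * Δ) ((n + 1) * Δ)).indicator
      (fun _ => anorm ε Δ γ * exp (-ε) ^ (n + 1)) x

variable {ε Δ γ}

lemma shell_radii_le (hΔ : 0 < Δ) (hγ : γ ∈ Icc (0 : ℝ) 1) (n : ℕ) :
    0 ≤ n * Δ ∧ n * Δ ≤ (n + γ) * Δ ∧ (n + γ) * Δ ≤ (n + 1) * Δ :=
  ⟨by positivity, by nlinarith [hγ.1], by nlinarith [hγ.2]⟩

lemma stair_eq_tsum_stairShell (hΔ : 0 < Δ) (hγ : γ ∈ Icc (0 : ℝ) 1) (x : ℝ × ℝ) :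
    stair ε Δ γ x = ∑' n, stairShell ε Δ γ n x := by
  have ht : 0 ≤ l1 x / Δ := div_nonneg (by unfold l1; positivity) hΔ.le
  set k := ⌊l1 x / Δ⌋₊ with hk
  have hshell : ∀ n : ℕ, n * Δ ≤ l1 x → l1 x < (n + 1) * Δ → n = k := fun n h1 h2 =>
    ((Nat.floor_eq_iff ht).2 ⟨(le_div_iff₀ hΔ).2 h1, (div_lt_iff₀ hΔ).2 h2⟩).symm
  obtain ⟨hk1, hk2⟩ := (Nat.floor_eq_iff ht).1 hk.symm
  rw [le_div_iff₀ hΔ] at hk1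
  rw [div_lt_iff₀ hΔ] at hk2
  have hexp : ∀ m : ℕ, exp (-ε) ^ m = exp (-(m * ε)) := fun m => by
    rw [← exp_nat_mul]; ring_nf
  have hin n := (shell_radii_le hΔ hγ n).2.1
  have hout n := (shell_radii_le hΔ hγ n).2.2
  rw [tsum_eq_single k]
  · unfold stair stairShell
    rw [← natCast_floor_eq_intCast_floor ht, ← hk]
    by_cases h : l1 x < (k + γ) * Δ
    · simp [h, hk1, hexp]
    · simp [h, hk2, not_lt.1 h, hexp]
      left; ring
  · intro n hn
    rw [stairShell, indicator_of_notMem, indicator_of_notMem, add_zero]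
    · exact fun h => hn (hshell n ((hin n).trans h.1) h.2)
    · exact fun h => hn (hshell n h.1 (h.2.trans_le (hout n)))

lemma stairShell_nonneg (ha : 0 ≤ anorm ε Δ γ) (n : ℕ) : 0 ≤ stairShell ε Δ γ n := fun _ =>
  add_nonneg (indicator_nonneg (fun _ _ => by positivity) _)
    (indicator_nonneg (fun _ _ => by positivity) _)

lemma integrable_stairShell (hΔ : 0 < Δ) (hγ : γ ∈ Icc (0 : ℝ) 1) (n : ℕ) :
    Integrable (stairShell ε Δ γ n) := by
  obtain ⟨h0, hin, hout⟩ := shell_radii_le hΔ hγ n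
  exact (integrable_indicator_l1_preimage_Ico h0 hin _).add
    (integrable_indicator_l1_preimage_Ico (h0.trans hin) hout _)

lemma integral_stairShell (hΔ : 0 < Δ) (hγ : γ ∈ Icc (0 : ℝ) 1) (n : ℕ) :
    ∫ x, stairShell ε Δ γ n x = anorm ε Δ γ * (2 * Δ ^ 2 *
      (exp (-ε) ^ n * ((n + γ) ^ 2 - n ^ 2) + exp (-ε) ^ (n + 1) * ((n + 1) ^ 2 - (n + γ) ^ 2))) := by
  obtain ⟨h0, hin, hout⟩ := shell_radii_le hΔ hγ n
  simp only [stairShell]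
  rw [integral_add (integrable_indicator_l1_preimage_Ico h0 hin _)
      (integrable_indicator_l1_preimage_Ico (h0.trans hin) hout _),
    integral_indicator_l1_preimage_Ico h0 hin, integral_indicator_l1_preimage_Ico (h0.trans hin) hout]
  ring

end Staircase

/-- The two-dimensional staircase density integrates to one. -/
theorem staircase_integral_one (ε Δ γ : ℝ) (hε : 0 < ε) (hΔ : 0 < Δ)
    (hγ : γ ∈ Set.Icc (0 : ℝ) 1) :
    ∫ x : ℝ × ℝ, stair ε Δ γ x = 1 := by
  have hb1 : exp (-ε) < 1 := exp_lt_one_iff.2 (neg_lt_zero.2 hε)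
  have hD : 0 < γ ^ 2 + 2 * exp (-ε) / (1 - exp (-ε)) * γ +
      (exp (-ε) + exp (-ε) ^ 2) / (1 - exp (-ε)) ^ 2 := by
    have h1b : 0 < 1 - exp (-ε) := sub_pos.2 hb1
    have hγ0 : 0 ≤ γ := hγ.1
    positivity
  have ha : 0 < anorm ε Δ γ := by unfold anorm; positivity
  have hnorm : anorm ε Δ γ * (2 * Δ ^ 2 * (γ ^ 2 + 2 * exp (-ε) / (1 - exp (-ε)) * γ +
      (exp (-ε) + exp (-ε) ^ 2) / (1 - exp (-ε)) ^ 2)) = 1 :=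
    one_div_mul_cancel (by positivity)
  have hsum : HasSum (fun n => ∫ x, stairShell ε Δ γ n x) 1 :=
    (hnorm ▸ ((hasSum_shellMass (exp_pos _).le hb1 γ).mul_left (2 * Δ ^ 2)).mul_left _).congr_fun
      (integral_stairShell hΔ hγ)
  simp_rw [stair_eq_tsum_stairShell hΔ hγ]
  exact integral_tsum_of_nonneg (integrable_stairShell hΔ hγ) (stairShell_nonneg ha.le) hsum
end
end

section
/- For all ε > 0, Δ > 0 and γ ∈ [0,1], the two-dimensional staircase density satisfies the pointwise differential-privacy inequality: f_γ(x) ≤ e^ε · f_γ(x + t) for every x ∈ ℝ² and every t ∈ ℝ² with ‖t‖₁ ≤ Δ. -/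
open MeasureTheory Real Filter
open scoped ENNReal Topology

noncomputable section

/-! The density is `anorm ε Δ γ * exp (-L(‖x‖₁) ε)` for an integer level `L` that is monotone and
rises by exactly one under `u ↦ u + Δ`. Since `‖x + t‖₁ ≤ ‖x‖₁ + Δ`, the level of `x + t` exceeds
that of `x` by at most one, which costs at most a factor `e^ε`; the normalising constant is positive
because its quadratic in `γ` has negative discriminant. -/

def stairLevel (Δ γ u : ℝ) : ℤ :=
  if u < ((⌊u / Δ⌋ : ℝ) + γ) * Δ then ⌊u / Δ⌋ else ⌊u / Δ⌋ + 1

lemma stair_eq_anorm_mul_exp_level (ε Δ γ : ℝ) (x : ℝ × ℝ) :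
    stair ε Δ γ x = anorm ε Δ γ * exp (-(stairLevel Δ γ (l1 x) : ℝ) * ε) := by
  unfold stair stairLevel
  split_ifs <;> push_cast <;> rfl

lemma l1_add_le (x t : ℝ × ℝ) : l1 (x + t) ≤ l1 x + l1 t := by
  simp only [l1, Prod.fst_add, Prod.snd_add]
  linarith [abs_add_le x.1 t.1, abs_add_le x.2 t.2]

section stairLevel

variable {Δ : ℝ} (γ : ℝ)

lemma stairLevel_mono (hΔ : 0 ≤ Δ) : Monotone (stairLevel Δ γ) := by
  intro u v huv
  have hfloor : ⌊u / Δ⌋ ≤ ⌊v / Δ⌋ := Int.floor_mono (div_le_div_of_nonneg_right huv hΔ)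
  unfold stairLevel
  rcases hfloor.lt_or_eq with hlt | heq
  · split_ifs <;> omega
  · split_ifs with hu hv hv
    · omega
    · omega
    · exact absurd (huv.trans_lt (heq ▸ hv)) hu
    · omega

lemma stairLevel_add_self (hΔ : Δ ≠ 0) (u : ℝ) :
    stairLevel Δ γ (u + Δ) = stairLevel Δ γ u + 1 := by
  have hfloor : ⌊(u + Δ) / Δ⌋ = ⌊u / Δ⌋ + 1 := by
    rw [add_div, div_self hΔ, Int.floor_add_one]
  have hstep : u + Δ < ((⌊u / Δ⌋ : ℝ) + 1 + γ) * Δ ↔ u < ((⌊u / Δ⌋ : ℝ) + γ) * Δ := by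
    constructor <;> intro h <;> linarith
  unfold stairLevel
  rw [hfloor]
  push_cast
  split_ifs with h₁ h₂ h₂
  · rfl
  · exact absurd (hstep.mp h₁) h₂
  · exact absurd (hstep.mpr h₂) h₁
  · rfl

lemma stairLevel_l1_add_le (hΔ : 0 < Δ) {x t : ℝ × ℝ} (ht : l1 t ≤ Δ) :
    stairLevel Δ γ (l1 (x + t)) ≤ stairLevel Δ γ (l1 x) + 1 := by
  rw [← stairLevel_add_self γ hΔ.ne']
  exact stairLevel_mono γ hΔ.le ((l1_add_le x t).trans (by linarith))

end stairLevel

lemma staircase_quadratic_pos {b : ℝ} (hb₀ : 0 < b) (hb₁ : b < 1) (γ : ℝ) :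
    0 < γ ^ 2 + 2 * b / (1 - b) * γ + (b + b ^ 2) / (1 - b) ^ 2 := by
  have hb : 1 - b ≠ 0 := by linarith
  have hsq : γ ^ 2 + 2 * b / (1 - b) * γ + (b + b ^ 2) / (1 - b) ^ 2
      = (γ + b / (1 - b)) ^ 2 + b / (1 - b) ^ 2 := by
    field_simp
    ring
  rw [hsq]
  have : 0 < 1 - b := by linarith
  positivity

lemma anorm_pos {ε Δ : ℝ} (hε : 0 < ε) (hΔ : Δ ≠ 0) (γ : ℝ) : 0 < anorm ε Δ γ := by
  have := staircase_quadratic_pos (exp_pos (-ε)) (exp_lt_one_iff.mpr (neg_neg_of_pos hε)) γ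
  unfold anorm
  positivity

lemma stair_le_exp_mul_stair_of_stairLevel_le {ε Δ : ℝ} (hε : 0 < ε) (hΔ : Δ ≠ 0) (γ : ℝ)
    {x y : ℝ × ℝ} (hxy : stairLevel Δ γ (l1 y) ≤ stairLevel Δ γ (l1 x) + 1) :
    stair ε Δ γ x ≤ exp ε * stair ε Δ γ y := by
  have hxy' : (stairLevel Δ γ (l1 y) : ℝ) ≤ stairLevel Δ γ (l1 x) + 1 := by exact_mod_cast hxy
  rw [stair_eq_anorm_mul_exp_level, stair_eq_anorm_mul_exp_level, mul_left_comm, ← exp_add]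
  gcongr
  · exact (anorm_pos hε hΔ γ).le
  · nlinarith

theorem staircase_pointwise_dp_general (ε Δ γ : ℝ) (hε : 0 < ε) (hΔ : 0 < Δ) :
    ∀ x t : ℝ × ℝ, l1 t ≤ Δ → stair ε Δ γ x ≤ Real.exp ε * stair ε Δ γ (x + t) :=
  fun _ _ ht ↦ stair_le_exp_mul_stair_of_stairLevel_le hε hΔ.ne' γ
    (stairLevel_l1_add_le γ hΔ ht)

/-- The two-dimensional staircase density satisfies the pointwise
differential-privacy inequality. -/
theorem staircase_pointwise_dp (ε Δ γ : ℝ) (hε : 0 < ε) (hΔ : 0 < Δ)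
    (hγ : γ ∈ Set.Icc (0 : ℝ) 1) :
    ∀ x t : ℝ × ℝ, l1 t ≤ Δ → stair ε Δ γ x ≤ Real.exp ε * stair ε Δ γ (x + t) :=
  staircase_pointwise_dp_general ε Δ γ hε hΔ

end
end

section
/- Let ε > 0 and let Δ be a positive integer. Let p be a probability mass function on ℤ² such that p(i₁,j₁) ≤ e^ε · p(i₂,j₂) whenever |i₁−i₂| + |j₁−j₂| ≤ Δ. Define p̃ on ℤ² by p̃(0,0) = p(0,0) and p̃(i,j) = p_{|i|+|j|} for (i,j) ≠ (0,0), where for k ≥ 1, p_k = (Σ_{(i',j') ∈ ℤ² : |i'|+|j'| = k} p(i',j')) / (4k). Then p̃ is a probability mass function on ℤ² and p̃(i₁,j₁) ≤ e^ε · p̃(i₂,j₂) whenever |i₁−i₂| + |j₁−j₂| ≤ Δ. (Lemma 2: averaging over ℓ¹ spheres preserves the discrete differential-privacy constraint.) -/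
open scoped BigOperators

noncomputable section

/-!
On the ℓ¹ sphere of radius `k`, `ptilde` is the constant mean of `p`, so both functions have the
same mass on every sphere and `ptilde` has total mass one.

For the privacy bound between spheres of radii `a, b > 0`, split each sphere into four quarter
turns of the arc `{(k - t, t) : 0 ≤ t < k}`, and split the `a`-arc and the `b`-arc alike into
`a * b` slices. Slice `n` sits at `t = n / b` on the `a`-arc and at `t' = n / a` on the `b`-arc,
and these two points are at ℓ¹ distance `|a - b| ≤ Δ`, so the DP constraint applies to them.
Summing over slices compares `b • Σ p` on one arc with `a • Σ e^ε p` on the other, which is the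
inequality between the two means. If one radius is zero, every point of one sphere is within `Δ`
of every point of the other.
-/

open Finset

theorem Finset.sum_range_mul_comp_div {M : Type*} [AddCommMonoid M] (f : ℕ → M) (a b : ℕ) :
    ∑ n ∈ range (a * b), f (n / b) = b • ∑ t ∈ range a, f t := by
  induction a with
  | zero => simp
  | succ a ih =>
    rw [Nat.succ_mul, sum_range_add, ih, sum_range_succ, smul_add]
    congr 1
    rcases b.eq_zero_or_pos with rfl | hb
    · simp
    · have hdiv : ∀ x ∈ range b, (a * b + x) / b = a := fun x hx => by
        rw [mul_comm, Nat.mul_add_div hb, Nat.div_eq_of_lt (mem_range.1 hx), add_zero]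
      rw [sum_congr rfl fun x hx => congrArg f (hdiv x hx), sum_const, card_range]

theorem Finset.nsmul_sum_range_le_nsmul_sum_range {M : Type*} [AddCommMonoid M]
    [PartialOrder M] [IsOrderedAddMonoid M] {a b : ℕ} {g h : ℕ → M}
    (H : ∀ n < a * b, g (n / b) ≤ h (n / a)) :
    b • ∑ t ∈ range a, g t ≤ a • ∑ t ∈ range b, h t := by
  rw [← sum_range_mul_comp_div, ← sum_range_mul_comp_div, mul_comm b a]
  exact sum_le_sum fun n hn => H n (mem_range.1 hn)

theorem Nat.div_le_div_add_sub {a b n : ℕ} (hab : a ≤ b) (hn : n < a * b) :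
    n / a ≤ n / b + (b - a) := by
  have hb : 0 < b := Nat.pos_of_mul_pos_left (Nat.zero_lt_of_lt hn)
  have ht : n / b + 1 ≤ a := (Nat.div_lt_iff_lt_mul hb).2 hn
  suffices n / a * a < (n / b + 1 + (b - a)) * a by
    have := Nat.lt_of_mul_lt_mul_right this
    omega
  calc n / a * a ≤ n := Nat.div_mul_le_self n a
    _ < (n / b + 1) * b := by rw [mul_comm]; exact Nat.lt_mul_div_succ n hb
    _ = (n / b + 1) * a + (n / b + 1) * (b - a) := by rw [← mul_add, Nat.add_sub_cancel' hab]
    _ ≤ (n / b + 1) * a + a * (b - a) := by gcongr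
    _ = (n / b + 1 + (b - a)) * a := by ring

def l1Norm (u : ℤ × ℤ) : ℤ := |u.1| + |u.2|

theorem l1Norm_nonneg (u : ℤ × ℤ) : 0 ≤ l1Norm u := by unfold l1Norm; positivity

theorem l1Norm_pos {u : ℤ × ℤ} (hu : u ≠ 0) : 0 < l1Norm u := by
  obtain ⟨x, y⟩ := u
  simp only [ne_eq, Prod.mk_eq_zero, not_and_or] at hu
  simp only [l1Norm, Int.abs_eq_natAbs]
  omega

theorem abs_l1Norm_sub_l1Norm_le (u v : ℤ × ℤ) : |l1Norm u - l1Norm v| ≤ l1Norm (u - v) := by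
  simp only [l1Norm, Prod.fst_sub, Prod.snd_sub, Int.abs_eq_natAbs]
  omega

def l1Sphere (k : ℤ) : Set (ℤ × ℤ) := l1Norm ⁻¹' {k}

theorem finite_l1Sphere (k : ℤ) : (l1Sphere k).Finite := by
  refine (Set.finite_Icc (-k, -k) (k, k)).subset fun u hu => ?_
  simp only [l1Sphere, Set.mem_preimage, Set.mem_singleton_iff, l1Norm, Int.abs_eq_natAbs] at hu
  simp only [Set.mem_Icc, Prod.le_def]
  omega

instance (k : ℤ) : Finite (l1Sphere k) := (finite_l1Sphere k).to_subtype

theorem l1Sphere_zero : l1Sphere 0 = {0} := by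
  ext ⟨x, y⟩
  simp only [l1Sphere, Set.mem_preimage, Set.mem_singleton_iff, l1Norm, Prod.mk_eq_zero,
    Int.abs_eq_natAbs]
  omega

/-- The point `(k - t, t)` turned by `r` quarter turns. -/
def l1SpherePoint (k t : ℤ) : Fin 4 → ℤ × ℤ
  | 0 => (k - t, t)
  | 1 => (-t, k - t)
  | 2 => (t - k, -t)
  | 3 => (t, t - k)

theorem l1Norm_sub_l1SpherePoint_div_le {a b n : ℕ} (hn : n < a * b) (r : Fin 4) :
    l1Norm (l1SpherePoint a (n / b : ℕ) r - l1SpherePoint b (n / a : ℕ) r) ≤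
      |(a : ℤ) - b| := by
  have ha : 0 < a := Nat.pos_of_mul_pos_right (Nat.zero_lt_of_lt hn)
  have hb : 0 < b := Nat.pos_of_mul_pos_left (Nat.zero_lt_of_lt hn)
  have hdiv : (a ≤ b ∧ n / b ≤ n / a ∧ n / a ≤ n / b + (b - a)) ∨
      (b ≤ a ∧ n / a ≤ n / b ∧ n / b ≤ n / a + (a - b)) := by
    rcases le_total a b with hab | hba
    · exact .inl ⟨hab, Nat.div_le_div_left hab ha, Nat.div_le_div_add_sub hab hn⟩
    · exact .inr ⟨hba, Nat.div_le_div_left hba hb,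
        Nat.div_le_div_add_sub hba (mul_comm a b ▸ hn)⟩
  fin_cases r <;>
    simp only [l1SpherePoint, l1Norm, Prod.fst_sub, Prod.snd_sub, Int.abs_eq_natAbs] <;> omega

def l1SphereEquiv {k : ℕ} (hk : 0 < k) : Fin 4 × Fin k ≃ l1Sphere k :=
  Equiv.ofBijective (fun x => ⟨l1SpherePoint k x.2 x.1, by
      obtain ⟨r, t, ht⟩ := x
      fin_cases r <;> simp only [l1Sphere, Set.mem_preimage, Set.mem_singleton_iff, l1SpherePoint,
        l1Norm, Int.abs_eq_natAbs] <;> omega⟩)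
    ⟨by
      rintro ⟨r, t, ht⟩ ⟨r', t', ht'⟩ h
      fin_cases r <;> fin_cases r' <;>
        simp only [l1SpherePoint, Subtype.mk.injEq, Prod.mk.injEq] at h <;>
        simp [Fin.ext_iff] <;> omega,
     by
      rintro ⟨⟨x, y⟩, h⟩
      simp only [l1Sphere, Set.mem_preimage, Set.mem_singleton_iff, l1Norm,
        Int.abs_eq_natAbs] at h
      obtain ⟨r, t, ht, hr⟩ :
          ∃ (r : Fin 4) (t : ℕ), t < k ∧ l1SpherePoint k t r = (x, y) :=
        if h₀ : 0 < x ∧ 0 ≤ y then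
          ⟨0, y.toNat, by omega, by simp only [l1SpherePoint]; ext <;> omega⟩
        else if h₁ : x ≤ 0 ∧ 0 < y then
          ⟨1, (-x).toNat, by omega, by simp only [l1SpherePoint]; ext <;> omega⟩
        else if h₂ : x < 0 ∧ y ≤ 0 then
          ⟨2, (-y).toNat, by omega, by simp only [l1SpherePoint]; ext <;> omega⟩
        else ⟨3, x.toNat, by omega, by simp only [l1SpherePoint]; ext <;> omega⟩
      exact ⟨(r, ⟨t, ht⟩), Subtype.ext hr⟩⟩

theorem tsum_l1Sphere {M : Type*} [AddCommMonoid M] [TopologicalSpace M] [T2Space M] {k : ℕ}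
    (hk : 0 < k) (f : ℤ × ℤ → M) :
    ∑' u : l1Sphere k, f u = ∑ r : Fin 4, ∑ t ∈ range k, f (l1SpherePoint k t r) := by
  rw [← (l1SphereEquiv hk).tsum_eq, tsum_fintype, Fintype.sum_prod_type]
  exact sum_congr rfl fun r _ => Fin.sum_univ_eq_sum_range (fun t => f (l1SpherePoint k t r)) k

theorem natCard_l1Sphere {k : ℕ} (hk : 0 < k) : Nat.card (l1Sphere k) = 4 * k := by
  rw [← Nat.card_congr (l1SphereEquiv hk), Nat.card_prod, Nat.card_eq_fintype_card,
    Nat.card_eq_fintype_card, Fintype.card_fin, Fintype.card_fin]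

theorem tsum_div_natCard_le_of_forall_le {ι κ : Type*} [Finite ι] [Finite κ] [Nonempty ι]
    [Nonempty κ] {f : ι → ℝ} {g : κ → ℝ} (h : ∀ i j, f i ≤ g j) :
    (∑' i, f i) / Nat.card ι ≤ (∑' j, g j) / Nat.card κ := by
  have := Fintype.ofFinite ι
  have := Fintype.ofFinite κ
  simp only [tsum_fintype, Nat.card_eq_fintype_card, ← Fintype.expect_eq_sum_div_card]
  exact le_expect univ_nonempty fun j _ => expect_le univ_nonempty fun i _ => h i j

def l1SphereMean (p : ℤ × ℤ → ℝ) (k : ℤ) : ℝ :=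
  (∑' u : l1Sphere k, p u) / Nat.card (l1Sphere k)

section l1SphereMean

variable {p : ℤ × ℤ → ℝ}

theorem l1SphereMean_zero : l1SphereMean p 0 = p 0 := by
  rw [l1SphereMean, l1Sphere_zero, tsum_singleton, Nat.card_unique, Nat.cast_one, div_one]

theorem l1SphereMean_nonneg (hp : ∀ u, 0 ≤ p u) (k : ℤ) : 0 ≤ l1SphereMean p k :=
  div_nonneg (tsum_nonneg fun u => hp u) (Nat.cast_nonneg _)

theorem tsum_l1SphereMean (k : ℤ) :
    ∑' _u : l1Sphere k, l1SphereMean p k = ∑' u : l1Sphere k, p u := by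
  rw [tsum_const, nsmul_eq_mul, l1SphereMean]
  rcases isEmpty_or_nonempty (l1Sphere k) with h | h
  · simp
  · exact mul_div_cancel₀ _ (Nat.cast_ne_zero.2 Nat.card_pos.ne')

variable {c : ℝ}

theorem l1SphereMean_le_mul_of_forall {a b : ℤ} (ha : 0 ≤ a) (hb : 0 ≤ b)
    (h : ∀ u ∈ l1Sphere a, ∀ v ∈ l1Sphere b, p u ≤ c * p v) :
    l1SphereMean p a ≤ c * l1SphereMean p b := by
  have : Nonempty (l1Sphere a) := ⟨⟨(a, 0), by simp [l1Sphere, l1Norm, abs_of_nonneg ha]⟩⟩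
  have : Nonempty (l1Sphere b) := ⟨⟨(b, 0), by simp [l1Sphere, l1Norm, abs_of_nonneg hb]⟩⟩
  rw [l1SphereMean, l1SphereMean, ← mul_div_assoc, ← tsum_mul_left]
  exact tsum_div_natCard_le_of_forall_le fun u v => h u u.2 v v.2

theorem l1SphereMean_le_mul_of_pos {a b : ℕ} (ha : 0 < a) (hb : 0 < b)
    (hp : ∀ u v, l1Norm (u - v) ≤ |(a : ℤ) - b| → p u ≤ c * p v) :
    l1SphereMean p a ≤ c * l1SphereMean p b := by
  have hquarter (r : Fin 4) : b • ∑ t ∈ range a, p (l1SpherePoint a t r) ≤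
      a • ∑ t ∈ range b, c * p (l1SpherePoint b t r) :=
    nsmul_sum_range_le_nsmul_sum_range fun n hn => hp _ _ <|
      l1Norm_sub_l1SpherePoint_div_le hn r
  have hsum := sum_le_sum fun r (_ : r ∈ univ) => hquarter r
  simp only [nsmul_eq_mul, ← mul_sum] at hsum
  simp only [l1SphereMean, tsum_l1Sphere ha, tsum_l1Sphere hb, natCard_l1Sphere ha,
    natCard_l1Sphere hb]
  rw [mul_div_assoc', div_le_div_iff₀ (by positivity) (by positivity)]
  push_cast
  linarith

theorem l1SphereMean_le_mul {a b : ℤ} (ha : 0 ≤ a) (hb : 0 ≤ b)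
    (hp : ∀ u v, l1Norm (u - v) ≤ |a - b| → p u ≤ c * p v) :
    l1SphereMean p a ≤ c * l1SphereMean p b := by
  by_cases h₀ : a = 0 ∨ b = 0
  · refine l1SphereMean_le_mul_of_forall ha hb fun u hu v hv => hp u v ?_
    simp only [l1Sphere, Set.mem_preimage, Set.mem_singleton_iff, l1Norm, Prod.fst_sub,
      Prod.snd_sub, Int.abs_eq_natAbs] at hu hv ⊢
    omega
  · lift a to ℕ using ha
    lift b to ℕ using hb
    exact l1SphereMean_le_mul_of_pos (by omega) (by omega) hp

end l1SphereMean

theorem hasSum_of_hasSum_tsum_fiberwise {β γ : Type*} {f : β → ℝ} {a : ℝ} (hf : 0 ≤ f)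
    (g : β → γ) (hg : ∀ c, (g ⁻¹' {c}).Finite)
    (h : HasSum (fun c => ∑' b : g ⁻¹' {c}, f b) a) : HasSum f a := by
  have hs : Summable f :=
    (summable_partition hf (s := fun c => g ⁻¹' {c}) fun _ => existsUnique_eq').2
      ⟨fun c => have := (hg c).to_subtype; .of_finite, h.summable⟩
  exact h.unique (hs.hasSum.tsum_fiberwise g) ▸ hs.hasSum

theorem average_preserves_dp_general (ε : ℝ) (Δ : ℕ)
    (p : ℤ × ℤ → ℝ) (hp_nonneg : ∀ v, 0 ≤ p v) (hp_sum : HasSum p 1)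
    (hp_dp : ∀ u v : ℤ × ℤ, |u.1 - v.1| + |u.2 - v.2| ≤ (Δ : ℤ) →
      p u ≤ Real.exp ε * p v)
    (ptilde : ℤ × ℤ → ℝ)
    (hpt_zero : ptilde (0, 0) = p (0, 0))
    (hpt : ∀ v : ℤ × ℤ, v ≠ (0, 0) →
      ptilde v = (∑' u : {u : ℤ × ℤ // |u.1| + |u.2| = |v.1| + |v.2|}, p u) /
        (4 * ((|v.1| + |v.2| : ℤ) : ℝ))) :
    HasSum ptilde 1 ∧
      ∀ u v : ℤ × ℤ, |u.1 - v.1| + |u.2 - v.2| ≤ (Δ : ℤ) →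
        ptilde u ≤ Real.exp ε * ptilde v := by
  have hmean (v : ℤ × ℤ) : ptilde v = l1SphereMean p (l1Norm v) := by
    rcases eq_or_ne v 0 with rfl | hv
    · simpa [l1Norm, l1SphereMean_zero, Prod.mk_zero_zero] using hpt_zero
    obtain ⟨k, hk⟩ := Int.eq_ofNat_of_zero_le (l1Norm_nonneg v)
    have hk₀ : 0 < k := by have := l1Norm_pos hv; omega
    rw [hpt v hv]
    change (∑' u : l1Sphere (l1Norm v), p u) / (4 * ((l1Norm v : ℤ) : ℝ)) = _
    rw [hk, l1SphereMean, natCard_l1Sphere hk₀]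
    push_cast
    rfl
  refine ⟨hasSum_of_hasSum_tsum_fiberwise (fun v => hmean v ▸ l1SphereMean_nonneg hp_nonneg _)
    l1Norm finite_l1Sphere ?_, fun u v huv => ?_⟩
  · refine (hp_sum.tsum_fiberwise l1Norm).congr_fun fun k => ?_
    calc ∑' u : l1Sphere k, ptilde u = ∑' _u : l1Sphere k, l1SphereMean p k :=
          tsum_congr fun u => by rw [hmean, u.2]
      _ = _ := tsum_l1SphereMean k
  · rw [hmean, hmean]
    exact l1SphereMean_le_mul (l1Norm_nonneg u) (l1Norm_nonneg v) fun x y hxy =>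
      hp_dp x y (hxy.trans ((abs_l1Norm_sub_l1Norm_le u v).trans huv))

/-- Lemma 2: averaging a differentially private probability mass function on ℤ²
over each ℓ¹ sphere yields a probability mass function that still satisfies the
discrete ε-differential-privacy constraint. -/
theorem average_preserves_dp (ε : ℝ) (hε : 0 < ε) (Δ : ℕ) (hΔ : 0 < Δ)
    (p : ℤ × ℤ → ℝ) (hp_nonneg : ∀ v, 0 ≤ p v) (hp_sum : HasSum p 1)
    (hp_dp : ∀ u v : ℤ × ℤ, |u.1 - v.1| + |u.2 - v.2| ≤ (Δ : ℤ) →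
      p u ≤ Real.exp ε * p v)
    (ptilde : ℤ × ℤ → ℝ)
    (hpt_zero : ptilde (0, 0) = p (0, 0))
    (hpt : ∀ v : ℤ × ℤ, v ≠ (0, 0) →
      ptilde v = (∑' u : {u : ℤ × ℤ // |u.1| + |u.2| = |v.1| + |v.2|}, p u) /
        (4 * ((|v.1| + |v.2| : ℤ) : ℝ))) :
    HasSum ptilde 1 ∧
      ∀ u v : ℤ × ℤ, |u.1 - v.1| + |u.2 - v.2| ≤ (Δ : ℤ) →
        ptilde u ≤ Real.exp ε * ptilde v :=
  average_preserves_dp_general ε Δ p hp_nonneg hp_sum hp_dp ptilde hpt_zero hpt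
end
end

section
/- Let 1 ≤ k₁ < k₂ be integers and set Δ' = k₂ − k₁. Let B_k = {(i,j) ∈ ℤ² : |i|+|j| = k}. Then there exists a function M : B_{k₁} × B_{k₂} → ℝ such that: (1) M(u,v) ≥ 0 for all u, v; (2) M(u,v) = 0 whenever the ℓ¹ distance between u and v is not equal to Δ'; (3) Σ_{v ∈ B_{k₂}} M(u,v) = (k₁ + Δ')/k₁ = k₂/k₁ for every u ∈ B_{k₁}; and (4) Σ_{u ∈ B_{k₁}} M(u,v) = 1 for every v ∈ B_{k₂}. (The matrix filling-in lemma used in the proof of Lemma 2.) -/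
/-!
Enumerate `B_k` counterclockwise from `(k, 0)` as `p_k(0), …, p_k(4k - 1)` and attach to `p_k(a)`
the cell `[a/k, (a+1)/k]` of `[0, 4]`. Put `M(p_{k₁}(a), p_{k₂}(b)) = k₂ · |cell_a ∩ cell_b|`.
The cells of each sphere tile `[0, 4]`, so the row sums telescope to `k₂ · (1/k₁)` and the column
sums to `k₂ · (1/k₂) = 1`. Two overlapping cells lie over the same side of the two diamonds, at
offsets `r₁ ≤ r₂ ≤ r₁ + (k₂ - k₁)` from the first vertex of that side, and such points are at `ℓ¹`
distance exactly `k₂ - k₁`.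
-/

open Finset

def spherePoint (k a : ℕ) : ℤ × ℤ :=
  if a < k then (k - a, a)
  else if a < 2 * k then (k - a, 2 * k - a)
  else if a < 3 * k then (a - 3 * k, 2 * k - a)
  else (a - 3 * k, a - 4 * k)

def sphereIndex (k : ℕ) (u : ℤ × ℤ) : ℕ :=
  Int.toNat <|
    if 0 < u.1 ∧ 0 ≤ u.2 then u.2
    else if u.1 ≤ 0 ∧ 0 < u.2 then k - u.1
    else if u.1 < 0 ∧ u.2 ≤ 0 then 2 * k - u.2
    else 3 * k + u.1

section Sphere

variable {k a : ℕ} {u : ℤ × ℤ}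

lemma spherePoint_mem (ha : a < 4 * k) : |(spherePoint k a).1| + |(spherePoint k a).2| = k := by
  unfold spherePoint
  split_ifs <;> simp only [Int.abs_eq_natAbs] <;> omega

lemma sphereIndex_lt (hk : 0 < k) (hu : |u.1| + |u.2| = k) : sphereIndex k u < 4 * k := by
  simp only [Int.abs_eq_natAbs] at hu
  unfold sphereIndex
  split_ifs <;> omega

lemma spherePoint_sphereIndex (hu : |u.1| + |u.2| = k) : spherePoint k (sphereIndex k u) = u := by
  simp only [Int.abs_eq_natAbs] at hu
  unfold sphereIndex spherePoint
  split_ifs <;> ext <;> omega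

lemma sphereIndex_spherePoint (ha : a < 4 * k) : sphereIndex k (spherePoint k a) = a := by
  unfold sphereIndex spherePoint
  split_ifs <;> omega

def sphereEquiv (k : ℕ) (hk : 0 < k) : Fin (4 * k) ≃ {u : ℤ × ℤ // |u.1| + |u.2| = k} where
  toFun a := ⟨spherePoint k a, spherePoint_mem a.2⟩
  invFun u := ⟨sphereIndex k u, sphereIndex_lt hk u.2⟩
  left_inv a := Fin.ext (sphereIndex_spherePoint a.2)
  right_inv u := Subtype.ext (spherePoint_sphereIndex u.2)

lemma tsum_sphere_comp_sphereIndex (hk : 0 < k) (f : ℕ → ℝ) :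
    ∑' u : {u : ℤ × ℤ // |u.1| + |u.2| = k}, f (sphereIndex k u) = ∑ a ∈ range (4 * k), f a := by
  rw [← (sphereEquiv k hk).tsum_eq, tsum_fintype, ← Fin.sum_univ_eq_sum_range]
  exact Fintype.sum_congr _ _ fun a => congrArg f (sphereIndex_spherePoint a.2)

lemma offsets_le_of_cross_lt {k₁ k₂ r₁ r₂ : ℕ} (hk : k₁ ≤ k₂) (hr₁ : r₁ < k₁)
    (h₁ : r₁ * k₂ < (r₂ + 1) * k₁) (h₂ : r₂ * k₁ < (r₁ + 1) * k₂) :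
    r₁ ≤ r₂ ∧ r₂ + k₁ ≤ r₁ + k₂ := by
  constructor
  · by_contra! h
    nlinarith [Nat.mul_le_mul h.le hk]
  · by_contra! h
    obtain ⟨d, rfl⟩ := Nat.exists_eq_add_of_le hk
    obtain ⟨e, rfl⟩ := Nat.exists_eq_add_of_lt hr₁
    nlinarith

lemma l1_dist_spherePoint_of_offsets {k₁ k₂ q r₁ r₂ : ℕ} (hq : q < 4) (hr₁ : r₁ < k₁)
    (hr : r₁ ≤ r₂) (hr' : r₂ + k₁ ≤ r₁ + k₂) :
    |(spherePoint k₁ (q * k₁ + r₁)).1 - (spherePoint k₂ (q * k₂ + r₂)).1| +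
      |(spherePoint k₁ (q * k₁ + r₁)).2 - (spherePoint k₂ (q * k₂ + r₂)).2| = (k₂ : ℤ) - k₁ := by
  interval_cases q <;> simp only [spherePoint] <;> split_ifs <;> simp only [Int.abs_eq_natAbs] <;> omega

lemma l1_dist_spherePoint_of_cross_lt {k₁ k₂ a b : ℕ} (hk : k₁ ≤ k₂) (ha : a < 4 * k₁)
    (h₁ : a * k₂ < (b + 1) * k₁) (h₂ : b * k₁ < (a + 1) * k₂) :
    |(spherePoint k₁ a).1 - (spherePoint k₂ b).1| +
      |(spherePoint k₁ a).2 - (spherePoint k₂ b).2| = (k₂ : ℤ) - k₁ := by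
  have hk₁ : 0 < k₁ := by omega
  set q := a / k₁
  set r₁ := a % k₁
  have hq : q < 4 := (Nat.div_lt_iff_lt_mul hk₁).2 ha
  have hr₁ : r₁ < k₁ := Nat.mod_lt a hk₁
  have ha' : a = q * k₁ + r₁ := (Nat.div_add_mod' a k₁).symm
  have hqb : q * k₂ ≤ b := by
    by_contra! h
    nlinarith [Nat.mul_le_mul_right k₂ (Nat.div_mul_le_self a k₁)]
  obtain ⟨r₂, rfl⟩ := Nat.exists_eq_add_of_le hqb
  rw [ha'] at h₁ h₂ ⊢
  obtain ⟨hr, hr'⟩ := offsets_le_of_cross_lt hk hr₁ (by nlinarith) (by nlinarith)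
  exact l1_dist_spherePoint_of_offsets hq hr₁ hr hr'

end Sphere

def intervalOverlap (s e s' e' : ℝ) : ℝ := max 0 (min e e' - max s s')

section Overlap

variable {s e s' e' : ℝ}

lemma intervalOverlap_comm : intervalOverlap s e s' e' = intervalOverlap s' e' s e := by
  rw [intervalOverlap, intervalOverlap, min_comm, max_comm s]

lemma intervalOverlap_nonneg : 0 ≤ intervalOverlap s e s' e' := le_max_left _ _

lemma lt_of_intervalOverlap_pos (h : 0 < intervalOverlap s e s' e') : s < e' ∧ s' < e := by
  simp only [intervalOverlap, lt_max_iff, lt_irrefl, false_or, sub_pos, max_lt_iff,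
    lt_min_iff] at h
  tauto

lemma intervalOverlap_eq_sub (hse : s ≤ e) (h : s' ≤ e') :
    intervalOverlap s e s' e' = min e (max s e') - min e (max s s') := by
  simp only [intervalOverlap, max_def, min_def]
  split_ifs <;> linarith

lemma sum_intervalOverlap_of_monotone {t : ℕ → ℝ} (ht : Monotone t) {N : ℕ} (hse : s ≤ e)
    (h₀ : t 0 ≤ s) (hN : e ≤ t N) :
    ∑ j ∈ range N, intervalOverlap s e (t j) (t (j + 1)) = e - s := by
  rw [sum_congr rfl fun j _ => intervalOverlap_eq_sub hse (ht j.le_succ),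
    sum_range_sub (fun j => min e (max s (t j))), max_eq_right (hse.trans hN), min_eq_left hN,
    max_eq_left h₀, min_eq_right hse]

end Overlap

lemma cell_bounds_of_lt_four_mul {m a : ℕ} (ha : a < 4 * m) :
    0 ≤ (a : ℝ) / m ∧ (a : ℝ) / m ≤ (a + 1) / m ∧ ((a : ℝ) + 1) / m ≤ 4 := by
  have hm : (0 : ℝ) < m := Nat.cast_pos.2 (by omega)
  refine ⟨by positivity, by gcongr; linarith, (div_le_iff₀ hm).2 ?_⟩
  exact_mod_cast ha

lemma sum_intervalOverlap_grid {n : ℕ} (hn : 0 < n) {s e : ℝ} (hs : 0 ≤ s) (hse : s ≤ e)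
    (he : e ≤ 4) :
    ∑ j ∈ range (4 * n), intervalOverlap s e ((j : ℝ) / n) (((j : ℝ) + 1) / n) = e - s := by
  have ht : Monotone fun j : ℕ => (j : ℝ) / n := fun i j h =>
    div_le_div_of_nonneg_right (Nat.cast_le.2 h) n.cast_nonneg
  have h4 : ((4 * n : ℕ) : ℝ) / n = 4 := by field_simp; push_cast; ring
  convert sum_intervalOverlap_of_monotone ht hse (by simpa using hs) (by rwa [h4]) using 3
  push_cast; rfl

noncomputable def fillingWeight (k₁ k₂ a b : ℕ) : ℝ :=
  k₂ * intervalOverlap ((a : ℝ) / k₁) (((a : ℝ) + 1) / k₁) ((b : ℝ) / k₂) (((b : ℝ) + 1) / k₂)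

section Weight

variable {k₁ k₂ a b : ℕ}

lemma fillingWeight_nonneg : 0 ≤ fillingWeight k₁ k₂ a b :=
  mul_nonneg (Nat.cast_nonneg _) intervalOverlap_nonneg

lemma sum_fillingWeight_right (hk₂ : 0 < k₂) (ha : a < 4 * k₁) :
    ∑ b ∈ range (4 * k₂), fillingWeight k₁ k₂ a b = k₂ / k₁ := by
  obtain ⟨hs, hse, he⟩ := cell_bounds_of_lt_four_mul ha
  simp only [fillingWeight]
  rw [← mul_sum, sum_intervalOverlap_grid hk₂ hs hse he]
  ring

lemma sum_fillingWeight_left (hk₁ : 0 < k₁) (hb : b < 4 * k₂) :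
    ∑ a ∈ range (4 * k₁), fillingWeight k₁ k₂ a b = 1 := by
  obtain ⟨hs, hse, he⟩ := cell_bounds_of_lt_four_mul hb
  simp only [fillingWeight, intervalOverlap_comm (s := (_ : ℝ) / k₁)]
  have hk₂ : (k₂ : ℝ) ≠ 0 := Nat.cast_ne_zero.2 (by omega)
  rw [← mul_sum, sum_intervalOverlap_grid hk₁ hs hse he]
  field_simp
  ring

lemma cross_lt_of_fillingWeight_pos (hk₁ : 0 < k₁) (hk₂ : 0 < k₂)
    (h : 0 < fillingWeight k₁ k₂ a b) : a * k₂ < (b + 1) * k₁ ∧ b * k₁ < (a + 1) * k₂ := by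
  have ho := lt_of_intervalOverlap_pos (pos_of_mul_pos_right h k₂.cast_nonneg)
  rw [div_lt_div_iff₀ (by positivity) (by positivity),
    div_lt_div_iff₀ (by positivity) (by positivity)] at ho
  exact_mod_cast ho

end Weight

noncomputable def fillingMatrix (k₁ k₂ : ℕ) (u v : ℤ × ℤ) : ℝ :=
  if |u.1| + |u.2| = k₁ ∧ |v.1| + |v.2| = k₂ then
    fillingWeight k₁ k₂ (sphereIndex k₁ u) (sphereIndex k₂ v)
  else 0

section Matrix

variable {k₁ k₂ : ℕ} {u v : ℤ × ℤ}

lemma fillingMatrix_nonneg : 0 ≤ fillingMatrix k₁ k₂ u v := by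
  unfold fillingMatrix
  split_ifs
  exacts [fillingWeight_nonneg, le_rfl]

lemma fillingMatrix_of_mem (hu : |u.1| + |u.2| = k₁) (hv : |v.1| + |v.2| = k₂) :
    fillingMatrix k₁ k₂ u v = fillingWeight k₁ k₂ (sphereIndex k₁ u) (sphereIndex k₂ v) :=
  if_pos ⟨hu, hv⟩

lemma fillingMatrix_eq_zero (hk₁ : 0 < k₁) (hk : k₁ ≤ k₂)
    (h : |u.1 - v.1| + |u.2 - v.2| ≠ (k₂ : ℤ) - k₁) : fillingMatrix k₁ k₂ u v = 0 := by
  by_cases hmem : |u.1| + |u.2| = k₁ ∧ |v.1| + |v.2| = k₂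
  swap
  · exact if_neg hmem
  obtain ⟨hu, hv⟩ := hmem
  rw [fillingMatrix_of_mem hu hv]
  by_contra hne
  obtain ⟨h₁, h₂⟩ := cross_lt_of_fillingWeight_pos hk₁ (hk₁.trans_le hk)
    (fillingWeight_nonneg.lt_of_ne' hne)
  have hdist := l1_dist_spherePoint_of_cross_lt hk (sphereIndex_lt hk₁ hu) h₁ h₂
  rw [spherePoint_sphereIndex hu, spherePoint_sphereIndex hv] at hdist
  exact h hdist

lemma tsum_fillingMatrix_right (hk₁ : 0 < k₁) (hk₂ : 0 < k₂)
    (u : {u : ℤ × ℤ // |u.1| + |u.2| = k₁}) :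
    ∑' v : {v : ℤ × ℤ // |v.1| + |v.2| = k₂}, fillingMatrix k₁ k₂ u v = k₂ / k₁ := by
  rw [tsum_congr fun v => fillingMatrix_of_mem u.2 v.2, tsum_sphere_comp_sphereIndex hk₂,
    sum_fillingWeight_right hk₂ (sphereIndex_lt hk₁ u.2)]

lemma tsum_fillingMatrix_left (hk₁ : 0 < k₁) (hk₂ : 0 < k₂)
    (v : {v : ℤ × ℤ // |v.1| + |v.2| = k₂}) :
    ∑' u : {u : ℤ × ℤ // |u.1| + |u.2| = k₁}, fillingMatrix k₁ k₂ u v = 1 := by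
  rw [tsum_congr fun u => fillingMatrix_of_mem u.2 v.2,
    tsum_sphere_comp_sphereIndex hk₁ (fillingWeight k₁ k₂ · (sphereIndex k₂ v)),
    sum_fillingWeight_left hk₁ (sphereIndex_lt hk₂ v.2)]

end Matrix

/-- The matrix filling-in lemma: for ℓ¹ spheres B_{k₁} and B_{k₂} in ℤ² with
1 ≤ k₁ < k₂, there is a nonnegative matrix supported on pairs at ℓ¹ distance
Δ' = k₂ − k₁ whose row sums are all k₂/k₁ and whose column sums are all 1. -/
theorem matrix_filling (k₁ k₂ : ℤ) (hk₁ : 1 ≤ k₁) (hk : k₁ < k₂) :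
    ∃ M : (ℤ × ℤ) → (ℤ × ℤ) → ℝ,
      (∀ u v : ℤ × ℤ, 0 ≤ M u v) ∧
      (∀ u v : ℤ × ℤ, |u.1 - v.1| + |u.2 - v.2| ≠ k₂ - k₁ → M u v = 0) ∧
      (∀ u : {u : ℤ × ℤ // |u.1| + |u.2| = k₁},
        ∑' v : {v : ℤ × ℤ // |v.1| + |v.2| = k₂}, M u v = (k₂ : ℝ) / (k₁ : ℝ)) ∧
      (∀ v : {v : ℤ × ℤ // |v.1| + |v.2| = k₂},
        ∑' u : {u : ℤ × ℤ // |u.1| + |u.2| = k₁}, M u v = 1) := by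
  lift k₁ to ℕ using by omega
  lift k₂ to ℕ using by omega
  have h₁ : 0 < k₁ := by omega
  have h₂ : 0 < k₂ := by omega
  refine ⟨fillingMatrix k₁ k₂, fun u v => fillingMatrix_nonneg,
    fun u v => fillingMatrix_eq_zero h₁ (by omega), fun u => ?_,
    tsum_fillingMatrix_left h₁ h₂⟩
  rw [Int.cast_natCast, Int.cast_natCast]
  exact tsum_fillingMatrix_right h₁ h₂ u
end
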